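/- arXiv:2108.07045 — 2 statements merged into one kernel-verified Lean document; each statement's English description precedes it below -/
import Mathlib

section
/- Let LB ≥ 0 be a lower bound on OPT(PC2), i.e. LB ≤ OPT(PC2). Then the restricted linear program defining L'(LB) is a relaxation of PC2, and in particular LB ≤ L'(LB) ≤ L(LB) and L'(LB) ≤ OPT(PC2). Furthermore, L'(LB) = LB holds if and only if there exists a fractional set cover solution with radius LB that uses at most p sets. -/
open Finset

/-- Integer feasibility for the IP formulation PC2. -/
def PC2Int {I J : Type*} [Fintype I] [Fintype J] (d : I → J → ℝ) (p : ℕ)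
    (y : J → ℝ) (z : ℝ) : Prop :=
  (∀ j, y j = 0 ∨ y j = 1) ∧
  (∑ j, y j = (p : ℝ)) ∧
  (∀ i j, d i j - ∑ j' ∈ univ.filter (fun j' => d i j' < d i j),
      (d i j - d i j') * y j' ≤ z)

/-- Feasibility for the linear program PCLB. -/
def PCLBFeas {I J : Type*} [Fintype I] [Fintype J] (d : I → J → ℝ) (p : ℕ) (LB : ℝ)
    (y : J → ℝ) (z : ℝ) : Prop :=
  (∑ j, y j = (p : ℝ)) ∧
  (∀ i j, LB < d i j →
    d i j - ∑ j' ∈ univ.filter (fun j' => d i j' < d i j),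
        (d i j - max LB (d i j')) * y j' ≤ z) ∧
  LB ≤ z ∧
  (∀ j, 0 ≤ y j ∧ y j ≤ 1)

/-- Feasibility for the restricted linear program defining `L'(LB)`: the cut for customer `i`
is only imposed for the closest location `j` with `d_{ij} > LB` (i.e. `d_{ij} = d_i*`). -/
def PCLBRestrFeas {I J : Type*} [Fintype I] [Fintype J] (d : I → J → ℝ) (p : ℕ) (LB : ℝ)
    (y : J → ℝ) (z : ℝ) : Prop :=
  (∑ j, y j = (p : ℝ)) ∧
  (∀ i j, LB < d i j → (∀ j', LB < d i j' → d i j ≤ d i j') →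
    d i j - ∑ j' ∈ univ.filter (fun j' => d i j' < d i j),
        (d i j - max LB (d i j')) * y j' ≤ z) ∧
  LB ≤ z ∧
  (∀ j, 0 ≤ y j ∧ y j ≤ 1)

/-!
An integer solution of PC2 with value at least `LB` satisfies every cut of PCLB: if some open
facility lies within distance `LB` of customer `i`, it alone pushes each cut of `i` down to `LB`;
otherwise every `max LB d_{ij'}` with `y_{j'} = 1` is just `d_{ij'}` and the cut is that of PC2.
Dropping cuts only relaxes further.

The restricted cut of customer `i` sits at `d_i*`, and the locations closer than `d_i*` are
exactly those within distance `LB`; at `z = LB` it therefore reads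
`(d_i* - LB) (1 - Σ_{d_{ij} ≤ LB} y_j) ≤ 0`, i.e. `y` covers `i` at radius `LB`. Conversely a
cover using at most `p` sets can be raised to total mass `p` without losing coverage, and then
meets every cut of PCLB at `z = LB`. The value `L'(LB)` is attained, since the feasible `y` range
over the compact cube `[0,1]^J`.
-/

lemma IsCompact.isClosed_image_snd {X Y : Type*} [TopologicalSpace X] [TopologicalSpace Y]
    {K : Set X} (hK : IsCompact K) {A : Set (X × Y)} (hA : IsClosed A)
    (hAK : ∀ q ∈ A, q.1 ∈ K) :
    IsClosed (Prod.snd '' A) := by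
  have := isCompact_iff_compactSpace.mp hK
  have hB : IsClosed (Prod.map ((↑) : K → X) id ⁻¹' A) :=
    hA.preimage (continuous_subtype_val.prodMap continuous_id)
  convert isClosedMap_snd_of_compactSpace _ hB using 1
  ext z
  constructor
  · rintro ⟨q, hq, rfl⟩
    exact ⟨(⟨q.1, hAK q hq⟩, q.2), hq, rfl⟩
  · rintro ⟨q, hq, rfl⟩
    exact ⟨_, hq, rfl⟩

section
variable {I J : Type*} [Fintype I] [Fintype J] {d : I → J → ℝ} {p : ℕ} {LB : ℝ}
  {y : J → ℝ} {z : ℝ}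

lemma PC2Int.le_of_forall_le (h : PC2Int d p y z) {i : I} {j : J}
    (hj : ∀ j', d i j ≤ d i j') : d i j ≤ z := by
  have hcut := h.2.2 i j
  rwa [filter_false_of_mem fun j' _ => (hj j').not_gt, sum_empty, sub_zero] at hcut

variable (d) in
lemma exists_pc2Int (hp : p ≤ Fintype.card J) : ∃ y z, PC2Int d p y z := by
  classical
  obtain ⟨s, -, hs⟩ := exists_subset_card_eq (s := (univ : Finset J)) (by simpa using hp)
  obtain ⟨M, hM⟩ := (Set.finite_range (Function.uncurry d)).bddAbove
  refine ⟨fun j => if j ∈ s then 1 else 0, M, fun j => ?_, ?_, fun i j => ?_⟩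
  · by_cases hj : j ∈ s <;> simp [hj]
  · simp [sum_ite_mem, hs]
  · dsimp only
    have hsum : 0 ≤ ∑ j' ∈ univ.filter (fun j' => d i j' < d i j),
        (d i j - d i j') * (if j' ∈ s then 1 else 0) :=
      sum_nonneg fun j' hj' => mul_nonneg (sub_nonneg.2 (mem_filter.1 hj').2.le)
        (by split_ifs <;> norm_num)
    have hdM : d i j ≤ M := hM ⟨(i, j), rfl⟩
    linarith

lemma PC2Int.pclbFeas (h : PC2Int d p y z) (hz : LB ≤ z) : PCLBFeas d p LB y z := by
  obtain ⟨hbin, hsum, hcut⟩ := h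
  have hy : ∀ j, 0 ≤ y j ∧ y j ≤ 1 := fun j => by rcases hbin j with h | h <;> simp [h]
  refine ⟨hsum, fun i j hij => ?_, hz, hy⟩
  set F := univ.filter (fun j' => d i j' < d i j)
  by_cases hopen : ∃ j₀, d i j₀ ≤ LB ∧ y j₀ = 1
  · obtain ⟨j₀, hj₀, hy₀⟩ := hopen
    have hterm : (d i j - max LB (d i j₀)) * y j₀ ≤
        ∑ j' ∈ F, (d i j - max LB (d i j')) * y j' := by
      refine single_le_sum (f := fun j' => (d i j - max LB (d i j')) * y j')
        (fun j' hj' => mul_nonneg ?_ (hy j').1) ?_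
      · exact sub_nonneg.2 (max_le hij.le (mem_filter.1 hj').2.le)
      · exact mem_filter.2 ⟨mem_univ _, hj₀.trans_lt hij⟩
    rw [max_eq_left hj₀, hy₀, mul_one] at hterm
    linarith
  · push Not at hopen
    have hF : ∑ j' ∈ F, (d i j - max LB (d i j')) * y j' =
        ∑ j' ∈ F, (d i j - d i j') * y j' := by
      refine sum_congr rfl fun j' _ => ?_
      rcases le_or_gt (d i j') LB with hle | hgt
      · have : y j' = 0 := (hbin j').resolve_right (hopen j' hle)
        simp [this]
      · rw [max_eq_right hgt.le]
    rw [hF]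
    exact hcut i j

lemma PCLBFeas.pclbRestrFeas (h : PCLBFeas d p LB y z) : PCLBRestrFeas d p LB y z :=
  ⟨h.1, fun i j hij _ => h.2.1 i j hij, h.2.2⟩

lemma exists_le_sum_eq_of_sum_le {c : ℝ} (hy : ∀ j, 0 ≤ y j ∧ y j ≤ 1)
    (hs : ∑ j, y j ≤ c) (hc : c ≤ Fintype.card J) :
    ∃ y' : J → ℝ, (∀ j, 0 ≤ y' j ∧ y' j ≤ 1) ∧ ∑ j, y' j = c ∧ ∀ j, y j ≤ y' j := by
  set s := ∑ j, y j
  have hsn : s ≤ Fintype.card J := hs.trans hc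
  -- move `y` towards the all-ones vector; if `s = card J`, then `c = s` and the junk `t = 0` fits
  set t := (c - s) / (Fintype.card J - s)
  have ht₀ : 0 ≤ t := div_nonneg (by linarith) (by linarith)
  have ht₁ : t ≤ 1 := div_le_one_of_le₀ (by linarith) (by linarith)
  refine ⟨fun j => y j + t * (1 - y j), fun j => ?_, ?_, fun j => ?_⟩
  · have := hy j
    constructor <;> nlinarith
  · have hsum : ∑ j, (y j + t * (1 - y j)) = s + t * (Fintype.card J - s) := by
      simp [sum_add_distrib, ← mul_sum, sum_sub_distrib, s]
    rw [hsum, div_mul_cancel_of_imp fun h => by linarith]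
    ring
  · nlinarith [hy j]

lemma pclbFeas_of_cover (hsum : ∑ j, y j = p) (hy : ∀ j, 0 ≤ y j ∧ y j ≤ 1)
    (hcov : ∀ i, 1 ≤ ∑ j ∈ univ.filter (fun j => d i j ≤ LB), y j) :
    PCLBFeas d p LB y LB := by
  refine ⟨hsum, fun i j hij => ?_, le_rfl, hy⟩
  set C := univ.filter (fun j' => d i j' ≤ LB)
  set F := univ.filter (fun j' => d i j' < d i j)
  have hCF : C ⊆ F := fun j' hj' =>
    mem_filter.2 ⟨mem_univ _, (mem_filter.1 hj').2.trans_lt hij⟩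
  calc d i j - ∑ j' ∈ F, (d i j - max LB (d i j')) * y j'
      ≤ d i j - ∑ j' ∈ C, (d i j - max LB (d i j')) * y j' := by
        gcongr
        refine fun j' hj' _ => mul_nonneg ?_ (hy j').1
        exact sub_nonneg.2 (max_le hij.le (mem_filter.1 hj').2.le)
    _ = d i j - (d i j - LB) * ∑ j' ∈ C, y j' := by
        rw [mul_sum]
        congr 1
        exact sum_congr rfl fun j' hj' => by rw [max_eq_left (mem_filter.1 hj').2]
    _ ≤ LB := by nlinarith [hcov i]

lemma PCLBRestrFeas.one_le_sum_filter_le (h : PCLBRestrFeas d p LB y LB) (hp : 1 ≤ p) (i : I) :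
    1 ≤ ∑ j ∈ univ.filter (fun j => d i j ≤ LB), y j := by
  obtain ⟨hsum, hcut, -, hy⟩ := h
  by_cases hfar : ∃ j, LB < d i j
  · obtain ⟨j₀, hj₀, hmin⟩ := exists_min_image (univ.filter (fun j => LB < d i j)) (d i)
      (by simpa [Finset.Nonempty] using hfar)
    replace hj₀ : LB < d i j₀ := (mem_filter.1 hj₀).2
    replace hmin : ∀ j', LB < d i j' → d i j₀ ≤ d i j' := fun j' hj' =>
      hmin j' (mem_filter.2 ⟨mem_univ _, hj'⟩)
    have hF :
        univ.filter (fun j' => d i j' < d i j₀) = univ.filter (fun j' => d i j' ≤ LB) := by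
      ext j'
      simp only [mem_filter, mem_univ, true_and]
      exact ⟨fun h => not_lt.1 fun hgt => (hmin j' hgt).not_gt h, fun h => h.trans_lt hj₀⟩
    have hc := hcut i j₀ hj₀ hmin
    rw [hF, sum_congr rfl fun j' hj' => by rw [max_eq_left (mem_filter.1 hj').2],
      ← mul_sum] at hc
    nlinarith
  · push Not at hfar
    rw [filter_true_of_mem fun j _ => hfar j, hsum]
    exact_mod_cast hp

lemma isClosed_setOf_pclbRestrFeas :
    IsClosed {q : (J → ℝ) × ℝ | PCLBRestrFeas d p LB q.1 q.2} := by
  simp only [PCLBRestrFeas, Set.ofPred_and, Set.ofPred_forall]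
  refine (isClosed_eq (f := fun q : (J → ℝ) × ℝ => ∑ j, q.1 j) ?_ continuous_const).inter
    ((isClosed_iInter fun i => isClosed_iInter fun j => isClosed_iInter fun _ =>
      isClosed_iInter fun _ => isClosed_le ?_ continuous_snd).inter
    ((isClosed_le continuous_const continuous_snd).inter
    (isClosed_iInter fun j => (isClosed_le continuous_const ?_).inter
      (isClosed_le ?_ continuous_const)))) <;> fun_prop

end

lemma isClosed_setOf_exists_pclbRestrFeas {I J : Type*} [Fintype I] [Fintype J]
    (d : I → J → ℝ) (p : ℕ) (LB : ℝ) :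
    IsClosed {z | ∃ y, PCLBRestrFeas d p LB y z} := by
  have hbox : IsCompact (Set.univ.pi fun _ : J => Set.Icc (0 : ℝ) 1) :=
    isCompact_univ_pi fun _ => isCompact_Icc
  convert hbox.isClosed_image_snd
    (isClosed_setOf_pclbRestrFeas (d := d) (p := p) (LB := LB))
    (fun q hq => Set.mem_univ_pi.2 fun j => Set.mem_Icc.2 (hq.2.2.2 j)) using 1
  ext z
  simp

theorem stmt_14_general {I J : Type*} [Fintype I] [Fintype J] [Nonempty I] [Nonempty J]
    (d : I → J → ℝ)
    (p : ℕ) (hp1 : 1 ≤ p) (hp2 : p ≤ Fintype.card J)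
    (LB : ℝ)
    (hLB : LB ≤ sInf {z : ℝ | ∃ y, PC2Int d p y z}) :
    (∀ (y : J → ℝ) (z : ℝ), PC2Int d p y z → PCLBRestrFeas d p LB y z) ∧
    LB ≤ sInf {z : ℝ | ∃ y, PCLBRestrFeas d p LB y z} ∧
    sInf {z : ℝ | ∃ y, PCLBRestrFeas d p LB y z} ≤ sInf {z : ℝ | ∃ y, PCLBFeas d p LB y z} ∧
    sInf {z : ℝ | ∃ y, PCLBRestrFeas d p LB y z} ≤ sInf {z : ℝ | ∃ y, PC2Int d p y z} ∧
    (sInf {z : ℝ | ∃ y, PCLBRestrFeas d p LB y z} = LB ↔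
      ∃ y : J → ℝ, (∀ j, 0 ≤ y j ∧ y j ≤ 1) ∧
        (∀ i : I, 1 ≤ ∑ j ∈ univ.filter (fun j => d i j ≤ LB), y j) ∧
        ∑ j, y j ≤ (p : ℝ)) := by
  set S := {z : ℝ | ∃ y, PC2Int d p y z}
  set Sl := {z : ℝ | ∃ y, PCLBFeas d p LB y z}
  set Sr := {z : ℝ | ∃ y, PCLBRestrFeas d p LB y z}
  obtain ⟨y₀, z₀, h₀⟩ := exists_pc2Int d hp2
  have hSbdd : BddBelow S := by
    obtain ⟨j, hj⟩ := Finite.exists_min (d (Classical.arbitrary I))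
    exact ⟨_, fun z ⟨_, h⟩ => h.le_of_forall_le hj⟩
  have hrelax : ∀ y z, PC2Int d p y z → PCLBFeas d p LB y z :=
    fun y z h => h.pclbFeas (hLB.trans (csInf_le hSbdd ⟨y, h⟩))
  have hSlSr : Sl ⊆ Sr := fun z ⟨y, h⟩ => ⟨y, h.pclbRestrFeas⟩
  have hSSr : S ⊆ Sr := fun z ⟨y, h⟩ => hSlSr ⟨y, hrelax y z h⟩
  have hLBSr : LB ∈ lowerBounds Sr := fun z ⟨_, h⟩ => h.2.2.1
  have hSrne : Sr.Nonempty := ⟨z₀, hSSr ⟨y₀, h₀⟩⟩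
  have hLBle : LB ≤ sInf Sr := le_csInf hSrne hLBSr
  refine ⟨fun y z h => (hrelax y z h).pclbRestrFeas, hLBle,
    csInf_le_csInf ⟨LB, hLBSr⟩ ⟨z₀, y₀, hrelax y₀ z₀ h₀⟩ hSlSr,
    csInf_le_csInf ⟨LB, hLBSr⟩ ⟨z₀, y₀, h₀⟩ hSSr, fun heq => ?_, ?_⟩
  · obtain ⟨y, hy⟩ : LB ∈ Sr :=
      heq ▸ (isClosed_setOf_exists_pclbRestrFeas d p LB).csInf_mem hSrne ⟨LB, hLBSr⟩
    exact ⟨y, hy.2.2.2, hy.one_le_sum_filter_le hp1, hy.1.le⟩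
  · rintro ⟨y, hy, hcov, hsum⟩
    obtain ⟨y', hy', hsum', hyy'⟩ := exists_le_sum_eq_of_sum_le hy hsum (by exact_mod_cast hp2)
    have hcov' : ∀ i, 1 ≤ ∑ j ∈ univ.filter (fun j => d i j ≤ LB), y' j :=
      fun i => (hcov i).trans (sum_le_sum fun j _ => hyy' j)
    have hfeas : PCLBRestrFeas d p LB y' LB := (pclbFeas_of_cover hsum' hy' hcov').pclbRestrFeas
    exact le_antisymm (csInf_le ⟨LB, hLBSr⟩ ⟨y', hfeas⟩) hLBle

/-- If `0 ≤ LB ≤ OPT(PC2)`, the restricted LP defining `L'(LB)` is a relaxation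
of PC2, `LB ≤ L'(LB) ≤ L(LB)` and `L'(LB) ≤ OPT(PC2)`; moreover `L'(LB) = LB` iff there is a
fractional set cover solution with radius `LB` that uses at most `p` sets. -/
theorem stmt_14 {I J : Type*} [Fintype I] [Fintype J] [Nonempty I] [Nonempty J]
    (d : I → J → ℝ) (hd : ∀ i j, 0 ≤ d i j)
    (p : ℕ) (hp1 : 1 ≤ p) (hp2 : p ≤ Fintype.card J)
    (LB : ℝ) (hLB0 : 0 ≤ LB)
    (hLB : LB ≤ sInf {z : ℝ | ∃ y, PC2Int d p y z}) :
    (∀ (y : J → ℝ) (z : ℝ), PC2Int d p y z → PCLBRestrFeas d p LB y z) ∧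
    LB ≤ sInf {z : ℝ | ∃ y, PCLBRestrFeas d p LB y z} ∧
    sInf {z : ℝ | ∃ y, PCLBRestrFeas d p LB y z} ≤ sInf {z : ℝ | ∃ y, PCLBFeas d p LB y z} ∧
    sInf {z : ℝ | ∃ y, PCLBRestrFeas d p LB y z} ≤ sInf {z : ℝ | ∃ y, PC2Int d p y z} ∧
    (sInf {z : ℝ | ∃ y, PCLBRestrFeas d p LB y z} = LB ↔
      ∃ y : J → ℝ, (∀ j, 0 ≤ y j ∧ y j ≤ 1) ∧
        (∀ i : I, 1 ≤ ∑ j ∈ univ.filter (fun j => d i j ≤ LB), y j) ∧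
        ∑ j, y j ≤ (p : ℝ)) :=
  stmt_14_general d p hp1 hp2 LB hLB
end

section
/- Let d_1 < d_2 < … < d_K be the distinct elements of D and let k ∈ {1, …, K−1}. For any two values LB and LB' with d_k ≤ LB < d_{k+1} and d_k ≤ LB' < d_{k+1}, one has L(LB) = LB if and only if L(LB') = LB'. -/
open Finset

/-- The optimal value `L(LB)` of the linear program PCLB. -/
noncomputable def Lval {I J : Type*} [Fintype I] [Fintype J] (d : I → J → ℝ) (p : ℕ)
    (LB : ℝ) : ℝ :=
  sInf {z : ℝ | ∃ y, PCLBFeas d p LB y z}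

/-!
For `a ≤ LB < b` with `a, b` consecutive distance values, `LB < d i j` means `b ≤ d i j`, and
the PCLB constraint for `(i, j)` is tightest at the nearest facility `j` with `b ≤ d i j`,
where it reads `z ≥ LB + (d i j - LB) (1 - c i)`, `c i` being the `y`-mass within distance `a`
of `i`. Hence `L(LB) = LB` exactly when, for every `ε > 0`, some fractional `p`-assignment `y`
gives mass at least `1 - ε` within distance `a` to every customer having a facility at
distance `≥ b`; this condition does not mention `LB`.
-/

section PCLB

variable {I J : Type*} {d : I → J → ℝ} {p : ℕ} {a b LB : ℝ}

lemma b_le_of_lt (hgap : ∀ i j, ¬(a < d i j ∧ d i j < b)) (hLB : a ≤ LB) {i : I} {j : J}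
    (h : LB < d i j) : b ≤ d i j :=
  not_lt.mp fun hb => hgap i j ⟨hLB.trans_lt h, hb⟩

variable [Fintype J]

noncomputable def nearMass (d : I → J → ℝ) (a : ℝ) (y : J → ℝ) (i : I) : ℝ :=
  ∑ j ∈ univ.filter (fun j => d i j ≤ a), y j

def IsFracAssignment (p : ℕ) (y : J → ℝ) : Prop :=
  (∑ j, y j = (p : ℝ)) ∧ ∀ j, 0 ≤ y j ∧ y j ≤ 1

def NearMassAtLeast (d : I → J → ℝ) (p : ℕ) (a b ε : ℝ) : Prop :=
  ∃ y, IsFracAssignment p y ∧ ∀ i, (∃ j, b ≤ d i j) → 1 - ε ≤ nearMass d a y i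

lemma isFracAssignment_const (hp : p ≤ Fintype.card J) :
    IsFracAssignment p (fun _ : J => (p : ℝ) / Fintype.card J) := by
  have hcard : Fintype.card J = 0 → p = 0 := fun h => Nat.le_zero.mp (h ▸ hp)
  refine ⟨?_, fun _ => ⟨by positivity, div_le_one_of_le₀ (by exact_mod_cast hp) (by positivity)⟩⟩
  rw [sum_const, card_univ, nsmul_eq_mul]
  exact mul_div_cancel_of_imp' fun h => by simp [hcard (by exact_mod_cast h)]

lemma sum_filter_le_eq_mul_nearMass (hLB : a ≤ LB) (y : J → ℝ) (i : I) (c : ℝ) :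
    ∑ j ∈ univ.filter (fun j => d i j ≤ a), (c - max LB (d i j)) * y j
      = (c - LB) * nearMass d a y i := by
  rw [nearMass, mul_sum]
  refine sum_congr rfl fun j hj => ?_
  rw [max_eq_left ((mem_filter.mp hj).2.trans hLB)]

lemma mul_nearMass_le_pclbSum (hLB1 : a ≤ LB) (hLB2 : LB < b) {y : J → ℝ}
    (hy : ∀ j, 0 ≤ y j) {i : I} {j : J} (hij : b ≤ d i j) :
    (d i j - LB) * nearMass d a y i
      ≤ ∑ j' ∈ univ.filter (fun j' => d i j' < d i j), (d i j - max LB (d i j')) * y j' := by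
  rw [← sum_filter_le_eq_mul_nearMass hLB1]
  refine sum_le_sum_of_subset_of_nonneg (fun j' hj' => ?_) fun j' hj' _ => ?_
  · simp only [mem_filter, mem_univ, true_and] at hj' ⊢
    linarith
  · have : max LB (d i j') < d i j := max_lt (hLB2.trans_le hij) (mem_filter.mp hj').2
    exact mul_nonneg (by linarith) (hy j')

lemma filter_lt_eq_filter_le_of_isMin (hgap : ∀ i j, ¬(a < d i j ∧ d i j < b)) (hab : a < b)
    {i : I} {j : J} (hij : b ≤ d i j) (hmin : ∀ j', b ≤ d i j' → d i j ≤ d i j') :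
    univ.filter (fun j' => d i j' < d i j) = univ.filter (fun j' => d i j' ≤ a) := by
  ext j'
  simp only [mem_filter, mem_univ, true_and]
  refine ⟨fun h => not_lt.mp fun ha => ?_, fun h => by linarith⟩
  exact (hmin j' (b_le_of_lt hgap le_rfl ha)).not_gt h

variable [Fintype I] (hgap : ∀ i j, ¬(a < d i j ∧ d i j < b))
include hgap

lemma pclbFeas_of_nearMass (hLB1 : a ≤ LB) (hLB2 : LB < b) {y : J → ℝ}
    (hy : IsFracAssignment p y) {ε M : ℝ} (hε : 0 ≤ ε) (hM : ∀ i j, d i j ≤ M)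
    (hLBM : LB ≤ M) (hmass : ∀ i, (∃ j, b ≤ d i j) → 1 - ε ≤ nearMass d a y i) :
    PCLBFeas d p LB y (LB + ε * (M - LB)) := by
  refine ⟨hy.1, fun i j hij => ?_, le_add_of_nonneg_right (mul_nonneg hε (sub_nonneg.mpr hLBM)), hy.2⟩
  have hb := b_le_of_lt hgap hLB1 hij
  have hsum := mul_nearMass_le_pclbSum hLB1 hLB2 (fun j => (hy.2 j).1) hb
  have hpos : 0 ≤ d i j - LB := by linarith
  have hmass' := mul_le_mul_of_nonneg_left (hmass i ⟨j, hb⟩) hpos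
  have hdM := mul_le_mul_of_nonneg_left (sub_le_sub_right (hM i j) LB) hε
  linarith

lemma pclbFeas_nonempty (hp : p ≤ Fintype.card J) (hLB1 : a ≤ LB) (hLB2 : LB < b) :
    {z : ℝ | ∃ y, PCLBFeas d p LB y z}.Nonempty := by
  obtain ⟨M, hM⟩ := Finite.exists_le fun ij : I × J => d ij.1 ij.2
  refine ⟨_, _, pclbFeas_of_nearMass (M := max M LB) hgap hLB1 hLB2
    (isFracAssignment_const hp) zero_le_one (fun i j => le_max_of_le_left (hM (i, j)))
    (le_max_right _ _) fun i _ => ?_⟩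
  rw [sub_self]
  exact sum_nonneg fun j _ => ((isFracAssignment_const hp).2 j).1

lemma nearMassAtLeast_of_lval_eq (hp : p ≤ Fintype.card J) (hLB1 : a ≤ LB) (hLB2 : LB < b)
    (hL : Lval d p LB = LB) {ε : ℝ} (hε : 0 < ε) : NearMassAtLeast d p a b ε := by
  obtain ⟨z, ⟨y, hfeas⟩, hz⟩ := Real.lt_sInf_add_pos (pclbFeas_nonempty hgap hp hLB1 hLB2)
    (mul_pos hε (sub_pos.mpr hLB2))
  rw [← Lval, hL] at hz
  refine ⟨y, ⟨hfeas.1, hfeas.2.2.2⟩, fun i ⟨j₀, hj₀⟩ => ?_⟩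
  obtain ⟨j, hj, hmin⟩ := exists_min_image (univ.filter fun j => b ≤ d i j) (d i)
    ⟨j₀, by simpa using hj₀⟩
  simp only [mem_filter, mem_univ, true_and] at hj hmin
  have hc := hfeas.2.1 i j (hLB2.trans_le hj)
  rw [filter_lt_eq_filter_le_of_isMin hgap (hLB1.trans_lt hLB2) hj hmin,
    sum_filter_le_eq_mul_nearMass hLB1] at hc
  -- `(d i j - LB) (1 - nearMass) ≤ z - LB < ε (b - LB) ≤ ε (d i j - LB)`
  have hpos : 0 < d i j - LB := by linarith
  have hlt : (d i j - LB) * (1 - nearMass d a y i) < (d i j - LB) * ε := by nlinarith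
  linarith [lt_of_mul_lt_mul_left hlt hpos.le]

lemma lval_eq_of_nearMassAtLeast (hp : p ≤ Fintype.card J) (hLB1 : a ≤ LB) (hLB2 : LB < b)
    (h : ∀ ε > 0, NearMassAtLeast d p a b ε) : Lval d p LB = LB := by
  have hne := pclbFeas_nonempty hgap hp hLB1 hLB2
  refine le_antisymm (le_of_forall_pos_le_add fun η hη => ?_)
    (le_csInf hne fun z ⟨_, hy⟩ => hy.2.2.1)
  obtain ⟨M, hM⟩ := Finite.exists_le fun ij : I × J => d ij.1 ij.2
  set M' := max M (LB + 1)
  have hLBM : LB + 1 ≤ M' := le_max_right M (LB + 1)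
  have hM' : 0 < M' - LB := by linarith
  obtain ⟨y, hy, hmass⟩ := h (η / (M' - LB)) (div_pos hη hM')
  have hfeas := pclbFeas_of_nearMass hgap hLB1 hLB2 hy (div_pos hη hM').le
    (fun i j => le_max_of_le_left (hM (i, j))) (by linarith) hmass
  rw [div_mul_cancel₀ η hM'.ne'] at hfeas
  exact csInf_le ⟨LB, fun _ ⟨_, hy⟩ => hy.2.2.1⟩ ⟨y, hfeas⟩

lemma lval_eq_iff_nearMassAtLeast (hp : p ≤ Fintype.card J) (hLB1 : a ≤ LB) (hLB2 : LB < b) :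
    Lval d p LB = LB ↔ ∀ ε > 0, NearMassAtLeast d p a b ε :=
  ⟨fun hL _ hε => nearMassAtLeast_of_lval_eq hgap hp hLB1 hLB2 hL hε,
    lval_eq_of_nearMassAtLeast hgap hp hLB1 hLB2⟩

end PCLB

theorem stmt_17_general {I J : Type*} [Fintype I] [Fintype J]
    (d : I → J → ℝ)
    (p : ℕ) (hp2 : p ≤ Fintype.card J)
    (a b : ℝ)
    (hconsec : ∀ i j, ¬(a < d i j ∧ d i j < b))
    (LB LB' : ℝ)
    (hLB1 : a ≤ LB) (hLB2 : LB < b)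
    (hLB'1 : a ≤ LB') (hLB'2 : LB' < b) :
    (Lval d p LB = LB ↔ Lval d p LB' = LB') :=
  (lval_eq_iff_nearMassAtLeast hconsec hp2 hLB1 hLB2).trans
    (lval_eq_iff_nearMassAtLeast hconsec hp2 hLB'1 hLB'2).symm

/-- Let `a = d_k` and `b = d_{k+1}` be two consecutive distinct distance values
(i.e. `a, b ∈ D`, `a < b`, and no distance value lies strictly between them). For any
`LB, LB' ∈ [a, b)`, one has `L(LB) = LB` iff `L(LB') = LB'`. -/
theorem stmt_17 {I J : Type*} [Fintype I] [Fintype J] [Nonempty I] [Nonempty J]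
    (d : I → J → ℝ) (hd : ∀ i j, 0 ≤ d i j)
    (p : ℕ) (hp1 : 1 ≤ p) (hp2 : p ≤ Fintype.card J)
    (a b : ℝ) (ha : ∃ i j, d i j = a) (hb : ∃ i j, d i j = b) (hab : a < b)
    (hconsec : ∀ i j, ¬(a < d i j ∧ d i j < b))
    (LB LB' : ℝ)
    (hLB1 : a ≤ LB) (hLB2 : LB < b)
    (hLB'1 : a ≤ LB') (hLB'2 : LB' < b) :
    (Lval d p LB = LB ↔ Lval d p LB' = LB') :=
  stmt_17_general d p hp2 a b hconsec LB LB' hLB1 hLB2 hLB'1 hLB'2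
end
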